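/- Converse commutativity: if P₁ : n₁ → m₁ and P₂ : n₂ → m₂ are connected iposets with P₁ ≇ P₂ and P₁ ⊗ P₂ ≅ P₂ ⊗ P₁, then (n₁ = 0 or n₂ = 0) and (m₁ = 0 or m₂ = 0). -/

import Mathlib

/-- Interval order condition for a strict order relation. -/
def IsIntervalOrderRel {α : Type} (lt : α → α → Prop) : Prop :=
  ∀ w x y z, lt w y → lt x z → lt w z ∨ lt x y

/-- Serial composition (ordinal sum) of two strict orders. -/
def serialLt {α β : Type} (r : α → α → Prop) (s : β → β → Prop) :
    α ⊕ β → α ⊕ β → Prop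
  | .inl a, .inl b => r a b
  | .inr a, .inr b => s a b
  | .inl _, .inr _ => True
  | .inr _, .inl _ => False

/-- Parallel composition (disjoint union) of two strict orders. -/
def parallelLt {α β : Type} (r : α → α → Prop) (s : β → β → Prop) :
    α ⊕ β → α ⊕ β → Prop
  | .inl a, .inl b => r a b
  | .inr a, .inr b => s a b
  | _, _ => False

/-- A poset with interfaces: a finite strict poset with injective interface
maps from the discrete posets `[n]` (onto minimal elements) and `[m]` (onto
maximal elements). -/
structure Iposet (n m : ℕ) where
  carrier : Type
  fin : Finite carrier
  lt : carrier → carrier → Prop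
  irrefl : ∀ x, ¬ lt x x
  trans : ∀ x y z, lt x y → lt y z → lt x z
  s : Fin n → carrier
  t : Fin m → carrier
  s_inj : Function.Injective s
  t_inj : Function.Injective t
  s_min : ∀ i x, ¬ lt x (s i)
  t_max : ∀ i x, ¬ lt (t i) x

namespace Iposet

/-- Parallel composition of iposets. -/
def par {n₁ m₁ n₂ m₂ : ℕ} (P : Iposet n₁ m₁) (Q : Iposet n₂ m₂) :
    Iposet (n₁ + n₂) (m₁ + m₂) where
  carrier := P.carrier ⊕ Q.carrier
  fin := by have := P.fin; have := Q.fin; exact inferInstance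
  lt a b := match a, b with
    | .inl x, .inl y => P.lt x y
    | .inr x, .inr y => Q.lt x y
    | _, _ => False
  irrefl := by
    rintro (x | x) h
    · exact P.irrefl x h
    · exact Q.irrefl x h
  trans := by
    rintro (x | x) (y | y) (z | z) h1 h2 <;>
      first
        | exact P.trans _ _ _ h1 h2
        | exact Q.trans _ _ _ h1 h2
        | exact h1.elim
        | exact h2.elim
  s := fun i =>
    if h : (i : ℕ) < n₁ then .inl (P.s ⟨i, h⟩)
    else .inr (Q.s ⟨(i : ℕ) - n₁, by have := i.isLt; omega⟩)
  t := fun i =>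
    if h : (i : ℕ) < m₁ then .inl (P.t ⟨i, h⟩)
    else .inr (Q.t ⟨(i : ℕ) - m₁, by have := i.isLt; omega⟩)
  s_inj := by
    intro i j h
    rcases Nat.lt_or_ge (i : ℕ) n₁ with hi | hi <;>
      rcases Nat.lt_or_ge (j : ℕ) n₁ with hj | hj
    · simp only [dif_pos hi, dif_pos hj] at h
      have h2 := P.s_inj (Sum.inl.inj h)
      simp only [Fin.mk.injEq] at h2
      exact Fin.ext h2
    · simp only [dif_pos hi, dif_neg (Nat.not_lt.mpr hj)] at h
      exact absurd h (by simp)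
    · simp only [dif_neg (Nat.not_lt.mpr hi), dif_pos hj] at h
      exact absurd h (by simp)
    · simp only [dif_neg (Nat.not_lt.mpr hi), dif_neg (Nat.not_lt.mpr hj)] at h
      have h2 := Q.s_inj (Sum.inr.inj h)
      simp only [Fin.mk.injEq] at h2
      exact Fin.ext (by omega)
  t_inj := by
    intro i j h
    rcases Nat.lt_or_ge (i : ℕ) m₁ with hi | hi <;>
      rcases Nat.lt_or_ge (j : ℕ) m₁ with hj | hj
    · simp only [dif_pos hi, dif_pos hj] at h
      have h2 := P.t_inj (Sum.inl.inj h)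
      simp only [Fin.mk.injEq] at h2
      exact Fin.ext h2
    · simp only [dif_pos hi, dif_neg (Nat.not_lt.mpr hj)] at h
      exact absurd h (by simp)
    · simp only [dif_neg (Nat.not_lt.mpr hi), dif_pos hj] at h
      exact absurd h (by simp)
    · simp only [dif_neg (Nat.not_lt.mpr hi), dif_neg (Nat.not_lt.mpr hj)] at h
      have h2 := Q.t_inj (Sum.inr.inj h)
      simp only [Fin.mk.injEq] at h2
      exact Fin.ext (by omega)
  s_min := by
    intro i a
    rcases Nat.lt_or_ge (i : ℕ) n₁ with hi | hi
    · simp only [dif_pos hi]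
      rcases a with x | x
      · exact P.s_min _ x
      · exact fun h => h
    · simp only [dif_neg (Nat.not_lt.mpr hi)]
      rcases a with x | x
      · exact fun h => h
      · exact Q.s_min _ x
  t_max := by
    intro i a
    rcases Nat.lt_or_ge (i : ℕ) m₁ with hi | hi
    · simp only [dif_pos hi]
      rcases a with x | x
      · exact P.t_max _ x
      · exact fun h => h
    · simp only [dif_neg (Nat.not_lt.mpr hi)]
      rcases a with x | x
      · exact fun h => h
      · exact Q.t_max _ x

open Classical in
/-- Gluing composition of iposets: targets of `P` are identified with sources
of `Q`, and every non-target point of `P` is ordered below every non-source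
point of `Q`. -/
noncomputable def glue {n m k : ℕ} (P : Iposet n m) (Q : Iposet m k) :
    Iposet n k where
  carrier := P.carrier ⊕ {q : Q.carrier // ¬ ∃ j, Q.s j = q}
  fin := by have := P.fin; have := Q.fin; exact inferInstance
  lt a b := match a, b with
    | .inl x, .inl y => P.lt x y
    | .inl x, .inr q => (¬ ∃ i, P.t i = x) ∨ (∃ i, P.t i = x ∧ Q.lt (Q.s i) q.val)
    | .inr p, .inr q => Q.lt p.val q.val
    | .inr _, .inl _ => False
  irrefl := by
    rintro (x | q) h
    · exact P.irrefl x h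
    · exact Q.irrefl q.val h
  trans := by
    rintro (x | x) (y | y) (z | z) h1 h2
    · exact P.trans _ _ _ h1 h2
    · left; rintro ⟨j, rfl⟩; exact P.t_max j y h1
    · exact h2.elim
    · rcases h1 with h1 | ⟨i, hi, hlt⟩
      · exact Or.inl h1
      · exact Or.inr ⟨i, hi, Q.trans _ _ _ hlt h2⟩
    · exact h1.elim
    · exact h1.elim
    · exact h2.elim
    · exact Q.trans _ _ _ h1 h2
  s := fun i => .inl (P.s i)
  t := fun i =>
    if h : ∃ j, Q.s j = Q.t i then .inl (P.t h.choose) else .inr ⟨Q.t i, h⟩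
  s_inj := fun i j h => P.s_inj (Sum.inl.inj h)
  t_inj := by
    intro i j h
    by_cases hi : ∃ a, Q.s a = Q.t i <;> by_cases hj : ∃ a, Q.s a = Q.t j
    · simp only [dif_pos hi, dif_pos hj] at h
      have h2 := P.t_inj (Sum.inl.inj h)
      apply Q.t_inj
      rw [← hi.choose_spec, ← hj.choose_spec, h2]
    · simp only [dif_pos hi, dif_neg hj] at h
      exact absurd h (by simp)
    · simp only [dif_neg hi, dif_pos hj] at h
      exact absurd h (by simp)
    · simp only [dif_neg hi, dif_neg hj, Sum.inr.injEq, Subtype.mk.injEq] at h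
      exact Q.t_inj h
  s_min := by
    rintro i (x | q) h
    · exact P.s_min i x h
    · exact h
  t_max := by
    intro i a
    by_cases hi : ∃ j, Q.s j = Q.t i
    · simp only [dif_pos hi]
      rcases a with x | q
      · exact P.t_max _ x
      · rintro (h | ⟨i', hi', hlt⟩)
        · exact h ⟨hi.choose, rfl⟩
        · have he : i' = hi.choose := P.t_inj hi'
          subst he
          rw [hi.choose_spec] at hlt
          exact Q.t_max i q.val hlt
    · simp only [dif_neg hi]
      rcases a with x | q
      · exact fun h => h
      · exact fun h => Q.t_max i q.val h

/-- The empty iposet. -/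
def ipoEmpty : Iposet 0 0 where
  carrier := PEmpty
  fin := inferInstance
  lt _ _ := False
  irrefl _ h := h
  trans := by intro x; exact x.elim
  s := Fin.elim0
  t := Fin.elim0
  s_inj := by intro i; exact i.elim0
  t_inj := by intro i; exact i.elim0
  s_min := fun i => i.elim0
  t_max := fun i => i.elim0

/-- The singleton iposet with empty source and empty target interface. -/
def ipo00 : Iposet 0 0 where
  carrier := PUnit
  fin := inferInstance
  lt _ _ := False
  irrefl _ h := h
  trans := by intro _ _ _ h; exact h.elim
  s := Fin.elim0
  t := Fin.elim0
  s_inj := by intro i; exact i.elim0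
  t_inj := by intro i; exact i.elim0
  s_min := fun i => i.elim0
  t_max := fun i => i.elim0

/-- The singleton iposet with empty source and full target interface. -/
def ipo01 : Iposet 0 1 where
  carrier := PUnit
  fin := inferInstance
  lt _ _ := False
  irrefl _ h := h
  trans := by intro _ _ _ h; exact h.elim
  s := Fin.elim0
  t := fun _ => PUnit.unit
  s_inj := by intro i; exact i.elim0
  t_inj := by intro i j _; exact Subsingleton.elim i j
  s_min := fun i => i.elim0
  t_max := fun _ _ h => h

/-- The singleton iposet with full source and empty target interface. -/
def ipo10 : Iposet 1 0 where
  carrier := PUnit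
  fin := inferInstance
  lt _ _ := False
  irrefl _ h := h
  trans := by intro _ _ _ h; exact h.elim
  s := fun _ => PUnit.unit
  t := Fin.elim0
  s_inj := by intro i j _; exact Subsingleton.elim i j
  t_inj := by intro i; exact i.elim0
  s_min := fun _ _ h => h
  t_max := fun i => i.elim0

/-- The singleton iposet with full source and full target interface. -/
def ipo11 : Iposet 1 1 where
  carrier := PUnit
  fin := inferInstance
  lt _ _ := False
  irrefl _ h := h
  trans := by intro _ _ _ h; exact h.elim
  s := fun _ => PUnit.unit
  t := fun _ => PUnit.unit
  s_inj := by intro i j _; exact Subsingleton.elim i j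
  t_inj := by intro i j _; exact Subsingleton.elim i j
  s_min := fun _ _ h => h
  t_max := fun _ _ h => h

/-- The identity iposet `n → n`: the discrete poset on `n` points with both
interface maps the identity. -/
def ipoId (n : ℕ) : Iposet n n where
  carrier := Fin n
  fin := inferInstance
  lt _ _ := False
  irrefl _ h := h
  trans := by intro _ _ _ h; exact h.elim
  s := id
  t := id
  s_inj := fun _ _ h => h
  t_inj := fun _ _ h => h
  s_min := fun _ _ h => h
  t_max := fun _ _ h => h

/-- Isomorphism of iposets: an order-preserving and order-reflecting bijection
commuting with the interface maps (the interface arities must agree). -/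
def Iso {n m n' m' : ℕ} (P : Iposet n m) (Q : Iposet n' m') : Prop :=
  n = n' ∧ m = m' ∧
  ∃ f : P.carrier ≃ Q.carrier,
    (∀ x y, P.lt x y ↔ Q.lt (f x) (f y)) ∧
    (∀ (i : Fin n) (j : Fin n'), (i : ℕ) = (j : ℕ) → f (P.s i) = Q.s j) ∧
    (∀ (i : Fin m) (j : Fin m'), (i : ℕ) = (j : ℕ) → f (P.t i) = Q.t j)

/-- `Subsu P Q` : `P` is subsumed by `Q`, i.e. there is an interface-preserving
order-reflecting bijection from `P` to `Q`. -/
def Subsu {n m : ℕ} (P Q : Iposet n m) : Prop :=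
  ∃ f : P.carrier ≃ Q.carrier,
    (∀ x y, Q.lt (f x) (f y) → P.lt x y) ∧
    (∀ i, f (P.s i) = Q.s i) ∧ (∀ i, f (P.t i) = Q.t i)

/-- Isomorphism of the underlying posets, ignoring interfaces. -/
def PosetIso {n m n' m' : ℕ} (P : Iposet n m) (Q : Iposet n' m') : Prop :=
  ∃ f : P.carrier ≃ Q.carrier, ∀ x y, P.lt x y ↔ Q.lt (f x) (f y)

/-- An iposet is discrete if its order relation is empty. -/
def IsDiscrete {n m : ℕ} (P : Iposet n m) : Prop := ∀ x y, ¬ P.lt x y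

/-- A starter is a discrete iposet whose target interface map is bijective. -/
def IsStarter {n m : ℕ} (P : Iposet n m) : Prop :=
  IsDiscrete P ∧ Function.Bijective P.t

/-- A terminator is a discrete iposet whose source interface map is bijective. -/
def IsTerminator {n m : ℕ} (P : Iposet n m) : Prop :=
  IsDiscrete P ∧ Function.Bijective P.s

/-- A symmetry is a discrete iposet with both interface maps bijective. -/
def IsSymmetry {n m : ℕ} (P : Iposet n m) : Prop :=
  IsDiscrete P ∧ Function.Bijective P.s ∧ Function.Bijective P.t

/-- Interface consistency: for points lying in both interfaces, the numbering
of the source interface agrees with that of the target interface. -/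
def InterfaceConsistent {n m : ℕ} (P : Iposet n m) : Prop :=
  ∀ (i j : Fin n) (i' j' : Fin m),
    P.s i = P.t i' → P.s j = P.t j' → ((i : ℕ) < (j : ℕ) ↔ (i' : ℕ) < (j' : ℕ))

/-- An iposet is connected if its underlying poset is nonempty and any two
points are joined by a zigzag of order relations. -/
def Connected {n m : ℕ} (P : Iposet n m) : Prop :=
  Nonempty P.carrier ∧
    ∀ x y, Relation.ReflTransGen (fun a b => P.lt a b ∨ P.lt b a) x y

/-- The interval order condition on the underlying poset of an iposet. -/
def IsIntervalOrder {n m : ℕ} (P : Iposet n m) : Prop :=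
  ∀ w x y z, P.lt w y → P.lt x z → P.lt w z ∨ P.lt x y

/-- The class of gluing-parallel iposets: generated (up to isomorphism) from
the empty iposet and the four singleton iposets by gluing and parallel
composition. -/
inductive IsGP : {n m : ℕ} → Iposet n m → Prop
  | empty : IsGP ipoEmpty
  | s00 : IsGP ipo00
  | s01 : IsGP ipo01
  | s10 : IsGP ipo10
  | s11 : IsGP ipo11
  | glue {n m k : ℕ} {P : Iposet n m} {Q : Iposet m k} :
      IsGP P → IsGP Q → IsGP (P.glue Q)
  | par {n₁ m₁ n₂ m₂ : ℕ} {P : Iposet n₁ m₁} {Q : Iposet n₂ m₂} :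
      IsGP P → IsGP Q → IsGP (P.par Q)
  | iso {n m n' m' : ℕ} {P : Iposet n m} {Q : Iposet n' m'} :
      IsGP P → Iso P Q → IsGP Q

/-- The ⊗-closure of the four singleton iposets (up to isomorphism):
parallel compositions of finitely many singletons. -/
inductive InParSingles : {n m : ℕ} → Iposet n m → Prop
  | s00 : InParSingles ipo00
  | s01 : InParSingles ipo01
  | s10 : InParSingles ipo10
  | s11 : InParSingles ipo11
  | par {n₁ m₁ n₂ m₂ : ℕ} {P : Iposet n₁ m₁} {Q : Iposet n₂ m₂} :
      InParSingles P → InParSingles Q → InParSingles (P.par Q)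
  | iso {n m n' m' : ℕ} {P : Iposet n m} {Q : Iposet n' m'} :
      InParSingles P → Iso P Q → InParSingles Q

/-- The induced subiposet of a poset (iposet with empty interfaces) on a
subset of its points. -/
def restrict (P : Iposet 0 0) (A : Set P.carrier) : Iposet 0 0 where
  carrier := {x : P.carrier // x ∈ A}
  fin := by have := P.fin; exact inferInstance
  lt a b := P.lt a.val b.val
  irrefl a := P.irrefl a.val
  trans := fun a b c h1 h2 => P.trans _ _ _ h1 h2
  s := Fin.elim0
  t := Fin.elim0
  s_inj := by intro i; exact i.elim0
  t_inj := by intro i; exact i.elim0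
  s_min := fun i => i.elim0
  t_max := fun i => i.elim0

end Iposet

/-! Connectivity forces an isomorphism `P₁ ⊗ P₂ ≅ P₂ ⊗ P₁` to send each of `P₁`, `P₂` wholly into
one summand, and bijectivity then leaves two possibilities. Either the summands are kept in
place, and the isomorphism restricts to `P₁ ≅ P₂`; or they are exchanged, and then the
interface point numbered `0` would change summand unless one of the two arities vanishes. -/

namespace Equiv

variable {α₁ α₂ β₁ β₂ : Type*}

theorem sum_isLeft_preserve_or_swap [Nonempty β₁] [Nonempty β₂]
    (e : α₁ ⊕ α₂ ≃ β₁ ⊕ β₂) (h₁ : ∀ x y, (e (.inl x)).isLeft = (e (.inl y)).isLeft)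
    (h₂ : ∀ x y, (e (.inr x)).isLeft = (e (.inr y)).isLeft) :
    (∀ x, (e x).isLeft = x.isLeft) ∨ ∀ x, (e x).isLeft = !x.isLeft := by
  obtain ⟨p, hp⟩ := e.surjective (.inl (Classical.arbitrary β₁))
  obtain ⟨q, hq⟩ := e.surjective (.inr (Classical.arbitrary β₂))
  rcases p with x | x <;> rcases q with y | y
  · simpa [hp, hq] using h₁ x y
  · left
    rintro (z | z)
    · simpa [hp] using h₁ z x
    · simpa [hq] using h₂ z y
  · right
    rintro (z | z)
    · simpa [hq] using h₁ z y
    · simpa [hp] using h₂ z x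
  · simpa [hp, hq] using h₂ x y

theorem exists_sum_inl_eq (e : α₁ ⊕ α₂ ≃ β₁ ⊕ β₂)
    (he : ∀ x, (e x).isLeft = x.isLeft) : ∃ g : α₁ ≃ β₁, ∀ x, e (.inl x) = .inl (g x) :=
  ⟨sumIsLeft.symm.trans ((e.subtypeEquiv fun x => by rw [he]).trans sumIsLeft),
    fun x => by simp⟩

end Equiv

namespace Iposet

section Arity

variable {α₁ α₂ β₁ β₂ : Type*} {a b c d : ℕ} {e : α₁ ⊕ α₂ → β₁ ⊕ β₂}
  {u : Fin (a + b) → α₁ ⊕ α₂} {v : Fin (c + d) → β₁ ⊕ β₂}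

theorem arity_eq_of_isLeft_eq (hu : ∀ i, (u i).isLeft ↔ (i : ℕ) < a)
    (hv : ∀ j, (v j).isLeft ↔ (j : ℕ) < c)
    (huv : ∀ (i : Fin (a + b)) (j : Fin (c + d)), (i : ℕ) = j → e (u i) = v j)
    (hsum : a + b = c + d) (he : ∀ x, (e x).isLeft = x.isLeft) : a = c := by
  have key : ∀ i (hi : i < a + b), i < a ↔ i < c := fun i hi => by
    rw [← hu ⟨i, hi⟩, ← he, huv _ ⟨i, by omega⟩ rfl, hv]
  rcases lt_trichotomy a c with hac | hac | hac
  · have := key a (by omega); omega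
  · exact hac
  · have := key c (by omega); omega

theorem arity_eq_zero_of_isLeft_eq_not (hu : ∀ i, (u i).isLeft ↔ (i : ℕ) < a)
    (hv : ∀ j, (v j).isLeft ↔ (j : ℕ) < c)
    (huv : ∀ (i : Fin (a + b)) (j : Fin (c + d)), (i : ℕ) = j → e (u i) = v j)
    (hsum : a + b = c + d) (he : ∀ x, (e x).isLeft = !x.isLeft) : a = 0 ∨ c = 0 := by
  have key : ∀ i (hi : i < a + b), i < a ↔ ¬ i < c := fun i hi => by
    rw [← hu ⟨i, hi⟩, ← Bool.not_not (u _).isLeft, ← he, huv _ ⟨i, by omega⟩ rfl,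
      Bool.not_eq_true', Bool.eq_false_iff, ne_eq, hv]
  by_contra! h
  have := key 0 (by omega)
  omega

end Arity

section Par

variable {n₁ m₁ n₂ m₂ : ℕ} (P : Iposet n₁ m₁) (Q : Iposet n₂ m₂)

theorem par_s_castAdd (i : Fin n₁) : (P.par Q).s (Fin.castAdd n₂ i) = .inl (P.s i) :=
  dif_pos i.isLt

theorem par_t_castAdd (i : Fin m₁) : (P.par Q).t (Fin.castAdd m₂ i) = .inl (P.t i) :=
  dif_pos i.isLt

theorem par_s_isLeft (i : Fin (n₁ + n₂)) : ((P.par Q).s i).isLeft ↔ (i : ℕ) < n₁ := by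
  by_cases h : (i : ℕ) < n₁ <;> simp [par, h]

theorem par_t_isLeft (i : Fin (m₁ + m₂)) : ((P.par Q).t i).isLeft ↔ (i : ℕ) < m₁ := by
  by_cases h : (i : ℕ) < m₁ <;> simp [par, h]

variable {P Q}

theorem par_lt_isLeft_eq {a b : (P.par Q).carrier} (h : (P.par Q).lt a b) :
    a.isLeft = b.isLeft := by
  rcases a with a | a <;> rcases b with b | b
  exacts [rfl, h.elim, h.elim, rfl]

end Par

theorem Connected.eq_of_lt_imp_eq {n m : ℕ} {β : Sort*} {P : Iposet n m} (hP : P.Connected)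
    {φ : P.carrier → β} (hφ : ∀ x y, P.lt x y → φ x = φ y) (x y : P.carrier) : φ x = φ y := by
  induction hP.2 x y with
  | refl => rfl
  | tail _ hstep ih => exact ih.trans (hstep.elim (hφ _ _) fun h => (hφ _ _ h).symm)

theorem Connected.isLeft_map_eq {n m n₁ m₁ n₂ m₂ : ℕ} {P : Iposet n m} {Q : Iposet n₁ m₁}
    {R : Iposet n₂ m₂} (hP : P.Connected) {g : P.carrier → (Q.par R).carrier}
    (hg : ∀ x y, P.lt x y → (Q.par R).lt (g x) (g y)) (x y : P.carrier) :
    (g x).isLeft = (g y).isLeft :=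
  hP.eq_of_lt_imp_eq (fun x y h => par_lt_isLeft_eq (hg x y h)) x y

theorem iso_of_par_equiv_isLeft {n₁ m₁ n₂ m₂ n₁' m₁' n₂' m₂' : ℕ} {P₁ : Iposet n₁ m₁}
    {P₂ : Iposet n₂ m₂} {Q₁ : Iposet n₁' m₁'} {Q₂ : Iposet n₂' m₂'}
    {f : (P₁.par P₂).carrier ≃ (Q₁.par Q₂).carrier}
    (hlt : ∀ x y, (P₁.par P₂).lt x y ↔ (Q₁.par Q₂).lt (f x) (f y))
    (hs : ∀ (i : Fin (n₁ + n₂)) (j : Fin (n₁' + n₂')), (i : ℕ) = j →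
      f ((P₁.par P₂).s i) = (Q₁.par Q₂).s j)
    (ht : ∀ (i : Fin (m₁ + m₂)) (j : Fin (m₁' + m₂')), (i : ℕ) = j →
      f ((P₁.par P₂).t i) = (Q₁.par Q₂).t j)
    (hn : n₁ + n₂ = n₁' + n₂') (hm : m₁ + m₂ = m₁' + m₂') (hf : ∀ x, (f x).isLeft = x.isLeft) :
    Iso P₁ Q₁ := by
  obtain ⟨g, hg⟩ : ∃ g : P₁.carrier ≃ Q₁.carrier, ∀ x, f (.inl x) = .inl (g x) :=
    f.exists_sum_inl_eq hf
  refine ⟨arity_eq_of_isLeft_eq (par_s_isLeft _ _) (par_s_isLeft _ _) hs hn hf,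
    arity_eq_of_isLeft_eq (par_t_isLeft _ _) (par_t_isLeft _ _) ht hm hf, g,
    fun x y => ?_, fun i j hij => ?_, fun i j hij => ?_⟩
  · have h := hlt (.inl x) (.inl y)
    rwa [hg, hg] at h
  · have h := hs (Fin.castAdd n₂ i) (Fin.castAdd n₂' j) hij
    rw [par_s_castAdd, par_s_castAdd, hg] at h
    exact Sum.inl_injective h
  · have h := ht (Fin.castAdd m₂ i) (Fin.castAdd m₂' j) hij
    rw [par_t_castAdd, par_t_castAdd, hg] at h
    exact Sum.inl_injective h

end Iposet

open Iposet in
/-- Converse commutativity: if two connected, non-isomorphic iposets have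
commuting parallel compositions, then their interface arities vanish
appropriately. -/
theorem par_comm_converse {n₁ m₁ n₂ m₂ : ℕ}
    (P₁ : Iposet n₁ m₁) (P₂ : Iposet n₂ m₂)
    (h₁ : Connected P₁) (h₂ : Connected P₂)
    (hne : ¬ Iso P₁ P₂) (hcomm : Iso (P₁.par P₂) (P₂.par P₁)) :
    (n₁ = 0 ∨ n₂ = 0) ∧ (m₁ = 0 ∨ m₂ = 0) := by
  obtain ⟨-, -, f, hlt, hs, ht⟩ := hcomm
  have := h₁.1
  have := h₂.1
  rcases f.sum_isLeft_preserve_or_swap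
      (h₁.isLeft_map_eq fun x y h => (hlt (.inl x) (.inl y)).1 h)
      (h₂.isLeft_map_eq fun x y h => (hlt (.inr x) (.inr y)).1 h) with hpres | hswap
  · exact absurd
      (iso_of_par_equiv_isLeft hlt hs ht (Nat.add_comm _ _) (Nat.add_comm _ _) hpres) hne
  · exact ⟨arity_eq_zero_of_isLeft_eq_not (par_s_isLeft _ _) (par_s_isLeft _ _) hs
        (Nat.add_comm _ _) hswap,
      arity_eq_zero_of_isLeft_eq_not (par_t_isLeft _ _) (par_t_isLeft _ _) ht
        (Nat.add_comm _ _) hswap⟩
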